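/- arXiv:2310.17362 — 5 statements merged into one kernel-verified Lean document; each statement's English description precedes it below -/
import Mathlib

section
/- Let W be finite with longest element w₀, and let τ : W → Aˣ be a multiplicative labelling. Then ∑_{w∈W} τ(w)^{-1} = τ(w₀)^{-1} · ∑_{w∈W} τ(w). -/
/-!
`W` acts on `W × ℤˣ` by letting `s` send `(t, e)` to `(s t s, ±e)`, with the sign flipped
exactly when `t = s`; the Coxeter relations hold because the signs picked up along
`(s s')^m` come in equal pairs. The second coordinate of the action of `w` on `(t, 1)` is a
sign `η(w, t)` with `η(w, t) = -1` iff the reflection `t` is a right inversion of `w` (the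
construction behind the strong exchange condition). Every reflection is a right inversion of
`w₀`, so the cocycle identity gives `η(w₀ v, t) = -η(v, t)`: the right descents of `w₀ v` are
the simple reflections that are not right descents of `v`, and induction on `v` yields
`ℓ(w₀ v) + ℓ(v) = ℓ(w₀)`. Hence `τ(w)⁻¹ = τ(w₀)⁻¹ τ(w₀ w⁻¹)`, and `w ↦ w₀ w⁻¹` permutes `W`.
-/

def signedConj {G : Type*} [Group G] (g : G) (c : G → ℤˣ) : Equiv.Perm (G × ℤˣ) :=
  Equiv.prodShear (MulAut.conj g).toEquiv fun t => Equiv.mulLeft (c t)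

section signedConj

variable {G : Type*} [Group G]

@[simp]
theorem signedConj_apply (g : G) (c : G → ℤˣ) (x : G × ℤˣ) :
    signedConj g c x = (g * x.1 * g⁻¹, c x.1 * x.2) := rfl

theorem signedConj_mul (g h : G) (c d : G → ℤˣ) :
    signedConj g c * signedConj h d = signedConj (g * h) fun t => c (h * t * h⁻¹) * d t := by
  ext ⟨t, e⟩ <;> simp [mul_assoc]

theorem signedConj_one : signedConj (1 : G) (fun _ => 1) = 1 := by
  ext <;> simp

end signedConj

namespace CoxeterSystem

variable {B W : Type*} [Group W] {M : CoxeterMatrix B} (cs : CoxeterSystem M W)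

local prefix:100 "s" => cs.simple
local prefix:100 "π" => cs.wordProd
local prefix:100 "ℓ" => cs.length

theorem simple_mul_pow_eq_inv_pow_mul_simple (i j : B) (k : ℕ) :
    s j * (s i * s j) ^ k = ((s i * s j) ^ k)⁻¹ * s j := by
  have hconj : s j * (s i * s j) * (s j)⁻¹ = (s i * s j)⁻¹ := by
    simp [mul_assoc, cs.inv_simple, cs.simple_mul_simple_self]
  rw [← inv_pow, ← hconj, conj_pow, cs.inv_simple, mul_assoc, cs.simple_mul_simple_self, mul_one]

section reflectionSign

open scoped Classical

noncomputable def simpleSignedConj (i : B) : Equiv.Perm (W × ℤˣ) :=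
  signedConj (s i) fun t => if t = s i then -1 else 1

theorem simpleSignedConj_mul_pow (i j : B) (k : ℕ) :
    (cs.simpleSignedConj i * cs.simpleSignedConj j) ^ k =
      signedConj ((s i * s j) ^ k) fun t =>
        ∏ q ∈ Finset.range (2 * k), if t = s j * (s i * s j) ^ q then -1 else 1 := by
  induction k with
  | zero => simp [signedConj_one]
  | succ k ih =>
    set p := s i * s j
    rw [pow_succ', ih, simpleSignedConj, simpleSignedConj, signedConj_mul, signedConj_mul,
      ← pow_succ']
    congr 1
    funext t
    have conj_eq_iff : ∀ g x : W, g * t * g⁻¹ = x ↔ t = g⁻¹ * x * g := fun g x => by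
      constructor <;> rintro rfl <;> group
    have hpk : (p ^ k)⁻¹ * s j = s j * p ^ k := (cs.simple_mul_pow_eq_inv_pow_mul_simple i j k).symm
    have h₁ : p ^ k * t * (p ^ k)⁻¹ = s j ↔ t = s j * p ^ (2 * k) := by
      rw [conj_eq_iff, hpk, mul_assoc, ← pow_add, two_mul]
    have h₂ : s j * (p ^ k * t * (p ^ k)⁻¹) * (s j)⁻¹ = s i ↔ t = s j * p ^ (2 * k + 1) := by
      rw [show s j * (p ^ k * t * (p ^ k)⁻¹) * (s j)⁻¹ = (s j * p ^ k) * t * (s j * p ^ k)⁻¹ by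
        group, conj_eq_iff, mul_inv_rev, cs.inv_simple, hpk,
        show 2 * k + 1 = k + 1 + k by ring, pow_add, pow_succ]
      simp only [p, mul_assoc]
    simp only [h₁, h₂, show 2 * (k + 1) = 2 * k + 1 + 1 by ring, Finset.prod_range_succ]
    ac_rfl

theorem isLiftable_simpleSignedConj : M.IsLiftable cs.simpleSignedConj := by
  intro i j
  rw [simpleSignedConj_mul_pow, cs.simple_mul_simple_pow]
  -- `q ↦ s j * (s i * s j) ^ q` has period `M i j`, so each sign occurs an even number of times
  have hperiodic : ∀ t, (∏ q ∈ Finset.range (2 * M i j),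
      if t = s j * (s i * s j) ^ q then (-1 : ℤˣ) else 1) = 1 := fun t => by
    simp only [two_mul, Finset.prod_range_add, pow_add, cs.simple_mul_simple_pow, one_mul,
      Int.units_mul_self]
  simp only [hperiodic, signedConj_one]

noncomputable def signedConjRep : W →* Equiv.Perm (W × ℤˣ) :=
  cs.lift ⟨cs.simpleSignedConj, cs.isLiftable_simpleSignedConj⟩

noncomputable def reflectionSign (w t : W) : ℤˣ := (cs.signedConjRep w (t, 1)).2

theorem signedConjRep_eq_signedConj (w : W) :
    cs.signedConjRep w = signedConj w (cs.reflectionSign w) := by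
  obtain ⟨c, hc⟩ : ∃ c, cs.signedConjRep w = signedConj w c := by
    induction w using cs.simple_induction_left with
    | one => exact ⟨fun _ => 1, by rw [map_one, signedConj_one]⟩
    | mul_simple_left w i ih =>
      obtain ⟨c, hc⟩ := ih
      exact ⟨_, by rw [map_mul, hc, signedConjRep, lift_apply_simple, simpleSignedConj,
        signedConj_mul]⟩
  have hc' : cs.reflectionSign w = c := funext fun t => by simp [reflectionSign, hc]
  rw [hc, hc']

@[simp]
theorem reflectionSign_one (t : W) : cs.reflectionSign 1 t = 1 := by
  simp [reflectionSign]

theorem reflectionSign_mul (u v t : W) :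
    cs.reflectionSign (u * v) t = cs.reflectionSign u (v * t * v⁻¹) * cs.reflectionSign v t := by
  have h := map_mul cs.signedConjRep u v
  simp only [signedConjRep_eq_signedConj, signedConj_mul] at h
  simpa using congrArg (fun f => (f (t, 1)).2) h

theorem reflectionSign_simple (i : B) (t : W) :
    cs.reflectionSign (s i) t = if t = s i then -1 else 1 := by
  simp [reflectionSign, signedConjRep, simpleSignedConj]

theorem reflectionSign_wordProd_of_not_mem_rightInvSeq {ω : List B} {t : W}
    (ht : t ∉ cs.rightInvSeq ω) : cs.reflectionSign (π ω) t = 1 := by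
  induction ω with
  | nil => simp
  | cons i ω ih =>
    simp only [rightInvSeq, List.mem_cons, not_or] at ht
    have : π ω * t * (π ω)⁻¹ ≠ s i := fun h => ht.1 (by rw [← h]; group)
    rw [wordProd_cons, reflectionSign_mul, reflectionSign_simple, if_neg this, ih ht.2, one_mul]

theorem reflectionSign_self {t : W} (ht : cs.IsReflection t) : cs.reflectionSign t t = -1 := by
  obtain ⟨u, i, rfl⟩ := ht
  have hinv : cs.reflectionSign u⁻¹ (u * s i * u⁻¹) * cs.reflectionSign u (s i) = 1 := by
    simpa using (cs.reflectionSign_mul u⁻¹ u (s i)).symm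
  rw [reflectionSign_mul, reflectionSign_mul, show u⁻¹ * (u * s i * u⁻¹) * u⁻¹⁻¹ = s i by group,
    mul_inv_cancel_right, reflectionSign_simple, if_pos rfl, mul_neg_one, neg_mul,
    mul_comm, hinv]

theorem reflectionSign_mul_self {t : W} (ht : cs.IsReflection t) (w : W) :
    cs.reflectionSign (w * t) t = -cs.reflectionSign w t := by
  rw [reflectionSign_mul, ht.mul_self, ht.inv, one_mul, reflectionSign_self cs ht, mul_neg_one]

theorem isRightInversion_iff_reflectionSign {w t : W} (ht : cs.IsReflection t) :
    cs.IsRightInversion w t ↔ cs.reflectionSign w t = -1 := by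
  have hlt : ∀ v, cs.reflectionSign v t = -1 → ℓ (v * t) < ℓ v := fun v hv => by
    obtain ⟨ω, hω, rfl⟩ := cs.exists_isReduced v
    by_cases hmem : t ∈ cs.rightInvSeq ω
    · exact (cs.isRightInversion_of_mem_rightInvSeq hω hmem).2
    · rw [reflectionSign_wordProd_of_not_mem_rightInvSeq cs hmem] at hv
      exact absurd hv (by decide)
  refine ⟨fun ⟨_, hwt⟩ => ?_, fun h => ⟨ht, hlt w h⟩⟩
  rcases Int.units_eq_one_or (cs.reflectionSign w t) with h | h
  · have := hlt (w * t) (by rw [reflectionSign_mul_self cs ht, h])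
    rw [mul_assoc, ht.mul_self, mul_one] at this
    omega
  · exact h

end reflectionSign

def IsLongestElement (w₀ : W) : Prop := ∀ w, ℓ w ≤ ℓ w₀

namespace IsLongestElement

variable {cs} {w₀ : W}

theorem isRightInversion (hw₀ : cs.IsLongestElement w₀) {t : W} (ht : cs.IsReflection t) :
    cs.IsRightInversion w₀ t :=
  ⟨ht, lt_of_le_of_ne (hw₀ _) (ht.length_mul_left_ne w₀)⟩

theorem isRightDescent_mul_iff (hw₀ : cs.IsLongestElement w₀) (v : W) (i : B) :
    cs.IsRightDescent (w₀ * v) i ↔ ¬cs.IsRightDescent v i := by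
  have hs := cs.isReflection_simple i
  have hw₀s : cs.reflectionSign w₀ (v * s i * v⁻¹) = -1 :=
    (cs.isRightInversion_iff_reflectionSign (hs.conj v)).mp (hw₀.isRightInversion (hs.conj v))
  simp only [← isRightInversion_simple_iff_isRightDescent,
    cs.isRightInversion_iff_reflectionSign hs, reflectionSign_mul, hw₀s]
  rcases Int.units_eq_one_or (cs.reflectionSign v (s i)) with h | h <;> simp [h]

theorem length_mul_add_length (hw₀ : cs.IsLongestElement w₀) (v : W) :
    ℓ (w₀ * v) + ℓ v = ℓ w₀ := by
  induction v using cs.simple_induction_right with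
  | one => simp
  | mul_simple_right v i ih =>
    have h := hw₀.isRightDescent_mul_iff v i
    unfold IsRightDescent at h
    rw [← mul_assoc]
    rcases cs.length_mul_simple v i with hv | hv <;>
    rcases cs.length_mul_simple (w₀ * v) i with hw | hw <;> omega

end IsLongestElement

end CoxeterSystem

/-- For a finite Coxeter system `(W, S)` with longest element `w₀` and a
multiplicative labelling `τ : W → Aˣ`, one has
`∑_{w ∈ W} τ(w)⁻¹ = τ(w₀)⁻¹ * ∑_{w ∈ W} τ(w)`. -/
theorem sum_of_inverse_labelling
    {B : Type*} {W : Type*} [Group W] [Fintype W] {M : CoxeterMatrix B}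
    (cs : CoxeterSystem M W)
    {A : Type*} [Ring A] (τ : W → Aˣ)
    (hτ : ∀ v w : W, cs.length (v * w) = cs.length v + cs.length w →
      τ (v * w) = τ v * τ w)
    (w₀ : W) (hw₀ : ∀ w : W, cs.length w ≤ cs.length w₀) :
    ∑ w : W, (((τ w)⁻¹ : Aˣ) : A) = (((τ w₀)⁻¹ : Aˣ) : A) * ∑ w : W, (τ w : A) := by
  have hfactor : ∀ w : W, τ w₀ = τ (w₀ * w⁻¹) * τ w := fun w => by
    have hlen := CoxeterSystem.IsLongestElement.length_mul_add_length hw₀ w⁻¹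
    rw [cs.length_inv] at hlen
    simpa using hτ (w₀ * w⁻¹) w (by simpa using hlen.symm)
  have hinv : ∀ w : W, (τ w)⁻¹ = (τ w₀)⁻¹ * τ (w₀ * w⁻¹) := fun w => by
    rw [hfactor w, mul_inv_rev, inv_mul_cancel_right]
  rw [Finset.mul_sum]
  exact Fintype.sum_equiv ((Equiv.inv W).trans (Equiv.mulLeft w₀)) _ _ fun w => by
    rw [hinv w, Units.val_mul]
    rfl
end

section
/- Assume that W_J(τ^{(ε)2}) := ∑_{w∈W_J} τ^{(ε)}(w)² is nonzero in K. Then for every left H-module V one has {v ∈ V : T_j v = τ^{(ε)}_j v for all j ∈ J} = U^{(ε)} · V. -/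
/-- If `W_J(τ^{(ε)2}) = ∑_{w ∈ W_J} τ^{(ε)}(w)² ≠ 0` in `K`, then for every
left `H`-module `V` the space of vectors transforming by `τ^{(ε)}` under the `T_j`
equals `U^{(ε)} · V`. -/
theorem symmetriser_image_is_isotypic_component
    {J : Type*} {W : Type*} [Group W] [Fintype W] {M : CoxeterMatrix J}
    (cs : CoxeterSystem M W)
    {K : Type*} [Field K] {H : Type*} [Ring H] [Algebra K H]
    (τ : W → Kˣ)
    (hτ : ∀ v w : W, cs.length (v * w) = cs.length v + cs.length w → τ (v * w) = τ v * τ w)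
    (T : W → Hˣ)
    (hT : ∀ v w : W, cs.length (v * w) = cs.length v + cs.length w → T (v * w) = T v * T w)
    (hquad : ∀ j : J, ((T (cs.simple j) : H) - algebraMap K H ((τ (cs.simple j) : K))) *
      ((T (cs.simple j) : H) + algebraMap K H (((τ (cs.simple j))⁻¹ : Kˣ) : K)) = 0)
    (ε : W →* ℤˣ)
    (τε : W → Kˣ)
    (hτε : ∀ v w : W, cs.length (v * w) = cs.length v + cs.length w → τε (v * w) = τε v * τε w)
    (hτεs : ∀ j : J, τε (cs.simple j) =
      if ε (cs.simple j) = 1 then τ (cs.simple j) else -(τ (cs.simple j))⁻¹)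
    (wJ : W) (hwJ : ∀ w : W, cs.length w ≤ cs.length wJ)
    (U : H)
    (hU : U = algebraMap K H (((τε wJ)⁻¹ : Kˣ) : K) *
      ∑ w : W, algebraMap K H ((τε w : K)) * (T w : H))
    (hne : (∑ w : W, ((τε w : K)) ^ 2) ≠ 0)
    {V : Type*} [AddCommGroup V] [Module K V] [Module H V] [IsScalarTower K H V] :
    {v : V | ∀ j : J, (T (cs.simple j) : H) • v = ((τε (cs.simple j) : K)) • v} =
      Set.range (fun v : V => U • v) := by
  classical
  set S : H := ∑ w : W, algebraMap K H ((τε w : K)) * (T w : H) with hS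
  -- basic facts
  have hT1 : (T 1 : H) = 1 := by
    have h := hT 1 1 (by simp)
    rw [mul_one] at h
    have h2 : T 1 * 1 = T 1 * T 1 := by rw [mul_one]; exact h
    have h3 : (1 : Hˣ) = T 1 := mul_left_cancel h2
    rw [← h3, Units.val_one]
  have hτε1 : (τε 1 : K) = 1 := by
    have h := hτε 1 1 (by simp)
    rw [mul_one] at h
    have h2 : τε 1 * 1 = τε 1 * τε 1 := by rw [mul_one]; exact h
    have h3 : (1 : Kˣ) = τε 1 := mul_left_cancel h2
    rw [← h3, Units.val_one]
  -- scalar commutes with H-action on V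
  have hscomm : ∀ (k : K) (h : H) (x : V), h • (k • x) = k • (h • x) := by
    intro k h x
    rw [← IsScalarTower.algebraMap_smul (R := K) (M := V) (A := H) k x, ← mul_smul,
      ← Algebra.commutes, mul_smul, IsScalarTower.algebraMap_smul]
  -- the key scalar identity
  have hab : ∀ j : J, 1 + (τε (cs.simple j) : K) *
      ((τ (cs.simple j) : K) - ((τ (cs.simple j) : K))⁻¹) = (τε (cs.simple j) : K) ^ 2 := by
    intro j
    have ha : (τ (cs.simple j) : K) ≠ 0 := Units.ne_zero _
    have h := hτεs j
    by_cases hε : ε (cs.simple j) = 1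
    · rw [if_pos hε] at h
      rw [h]
      field_simp
      ring
    · rw [if_neg hε] at h
      rw [h]
      push_cast [Units.val_neg, Units.val_inv_eq_inv_val]
      field_simp
      ring
  -- the quadratic relation in usable form
  have hquad' : ∀ j : J, (T (cs.simple j) : H) * (T (cs.simple j) : H) =
      algebraMap K H ((τ (cs.simple j) : K) - ((τ (cs.simple j) : K))⁻¹) *
        (T (cs.simple j) : H) + 1 := by
    intro j
    have ha : (τ (cs.simple j) : K) ≠ 0 := Units.ne_zero _
    have h := hquad j
    rw [Units.val_inv_eq_inv_val] at h
    set x := (T (cs.simple j) : H)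
    have hc : x * algebraMap K H ((τ (cs.simple j) : K))⁻¹ =
        algebraMap K H ((τ (cs.simple j) : K))⁻¹ * x := (Algebra.commutes _ _).symm
    have hab' : algebraMap K H ((τ (cs.simple j) : K)) *
        algebraMap K H ((τ (cs.simple j) : K))⁻¹ = 1 := by
      rw [← map_mul, mul_inv_cancel₀ ha, map_one]
    rw [sub_mul, mul_add, mul_add, hc] at h
    have h' : x * x + algebraMap K H ((τ (cs.simple j) : K))⁻¹ * x
        = algebraMap K H ((τ (cs.simple j) : K)) * x + 1 := by
      have h2 := sub_eq_zero.mp h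
      rw [hab'] at h2
      exact h2
    rw [map_sub, sub_mul, eq_sub_of_add_eq h']
    abel
  -- T_j * S = τε_j * S
  have hTS : ∀ j : J, (T (cs.simple j) : H) * S =
      algebraMap K H ((τε (cs.simple j) : K)) * S := by
    intro j
    rw [hS, Finset.mul_sum, Finset.mul_sum]
    have expand : ∀ w : W, (T (cs.simple j) : H) * (algebraMap K H ((τε w : K)) * (T w : H))
        = algebraMap K H ((τε w : K)) * (T (cs.simple j * w) : H)
          + (if cs.IsLeftDescent w j then
              algebraMap K H ((τε w : K) * ((τ (cs.simple j) : K) - ((τ (cs.simple j) : K))⁻¹))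
                * (T w : H) else 0) := by
      intro w
      by_cases hd : cs.IsLeftDescent w j
      · rw [if_pos hd]
        set w' := cs.simple j * w with hw'
        have hww : cs.simple j * w' = w := by
          rw [hw', ← mul_assoc, cs.simple_mul_simple_self, one_mul]
        have hdl := (cs.isLeftDescent_iff).mp hd
        rw [← hw'] at hdl
        have hlen : cs.length (cs.simple j * w') = cs.length (cs.simple j) + cs.length w' := by
          rw [hww, cs.length_simple]; omega
        have hTw : (T w : H) = (T (cs.simple j) : H) * (T w' : H) := by
          rw [← hww, hT _ _ hlen, Units.val_mul]
        calc (T (cs.simple j) : H) * (algebraMap K H ((τε w : K)) * (T w : H))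
            = algebraMap K H ((τε w : K)) *
              ((T (cs.simple j) : H) * ((T (cs.simple j) : H) * (T w' : H))) := by
              rw [← mul_assoc, ← Algebra.commutes, mul_assoc, hTw]
          _ = algebraMap K H ((τε w : K)) *
              ((algebraMap K H ((τ (cs.simple j) : K) - ((τ (cs.simple j) : K))⁻¹) *
                (T (cs.simple j) : H) + 1) * (T w' : H)) := by
              rw [← mul_assoc ((T (cs.simple j) : H)), hquad' j]
          _ = algebraMap K H ((τε w : K) * ((τ (cs.simple j) : K) - ((τ (cs.simple j) : K))⁻¹))
                * (T w : H) + algebraMap K H ((τε w : K)) * (T w' : H) := by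
              rw [add_mul, one_mul, mul_add, map_mul, mul_assoc, mul_assoc, ← Units.val_mul,
                ← hT _ _ hlen, hww]
          _ = _ := add_comm _ _
      · rw [if_neg hd, add_zero]
        have hlen : cs.length (cs.simple j * w) = cs.length (cs.simple j) + cs.length w := by
          rw [cs.length_simple, (cs.not_isLeftDescent_iff).mp hd]; omega
        rw [← mul_assoc, ← Algebra.commutes, mul_assoc, hT _ _ hlen, Units.val_mul]
    calc ∑ w : W, (T (cs.simple j) : H) * (algebraMap K H ((τε w : K)) * (T w : H))
        = ∑ w : W, (algebraMap K H ((τε w : K)) * (T (cs.simple j * w) : H)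
          + (if cs.IsLeftDescent w j then
              algebraMap K H ((τε w : K) * ((τ (cs.simple j) : K) - ((τ (cs.simple j) : K))⁻¹))
                * (T w : H) else 0)) := Finset.sum_congr rfl fun w _ => expand w
      _ = ∑ w : W, algebraMap K H ((τε (cs.simple j * w) : K)) * (T w : H)
          + ∑ w : W, (if cs.IsLeftDescent w j then
              algebraMap K H ((τε w : K) * ((τ (cs.simple j) : K) - ((τ (cs.simple j) : K))⁻¹))
                * (T w : H) else 0) := by
          rw [Finset.sum_add_distrib]
          congr 1
          apply Fintype.sum_equiv (Equiv.mulLeft (cs.simple j))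
          intro w
          simp only [Equiv.coe_mulLeft]
          rw [← mul_assoc, cs.simple_mul_simple_self, one_mul]
      _ = ∑ w : W, algebraMap K H ((τε (cs.simple j) : K)) *
            (algebraMap K H ((τε w : K)) * (T w : H)) := by
          rw [← Finset.sum_add_distrib]
          apply Finset.sum_congr rfl
          intro w _
          by_cases hd : cs.IsLeftDescent w j
          · rw [if_pos hd, ← mul_assoc, ← map_mul, ← add_mul, ← map_add]
            have hww : cs.simple j * (cs.simple j * w) = w := by
              rw [← mul_assoc, cs.simple_mul_simple_self, one_mul]
            have hdl := (cs.isLeftDescent_iff).mp hd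
            have hlen : cs.length (cs.simple j * (cs.simple j * w)) =
                cs.length (cs.simple j) + cs.length (cs.simple j * w) := by
              rw [hww, cs.length_simple]; omega
            have hrel : (τε w : K) = (τε (cs.simple j) : K) * (τε (cs.simple j * w) : K) := by
              have := hτε _ _ hlen
              rw [hww] at this
              rw [this, Units.val_mul]
            have hKey : (τε (cs.simple j * w) : K) + (τε w : K) *
                ((τ (cs.simple j) : K) - ((τ (cs.simple j) : K))⁻¹)
                = (τε (cs.simple j) : K) * (τε w : K) := by
              rw [hrel]
              linear_combination ((τε (cs.simple j * w) : K)) * hab j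
            rw [hKey]
          · rw [if_neg hd, add_zero, ← mul_assoc, ← map_mul]
            have hlen : cs.length (cs.simple j * w) =
                cs.length (cs.simple j) + cs.length w := by
              rw [cs.length_simple, (cs.not_isLeftDescent_iff).mp hd]; omega
            rw [hτε _ _ hlen, Units.val_mul]
  -- T_j * U = τε_j * U
  have hTU : ∀ j : J, (T (cs.simple j) : H) * U =
      algebraMap K H ((τε (cs.simple j) : K)) * U := by
    intro j
    rw [hU, ← mul_assoc, ← Algebra.commutes, mul_assoc, hTS j, ← mul_assoc,
      ← Algebra.commutes, mul_assoc]
  ext v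
  simp only [Set.mem_setOf_eq, Set.mem_range]
  constructor
  · intro hv
    -- T w • v = τε w • v for all w
    have key : ∀ n : ℕ, ∀ w : W, cs.length w = n → (T w : H) • v = ((τε w : K)) • v := by
      intro n
      induction n using Nat.strong_induction_on with
      | _ n ih =>
        intro w hw
        by_cases hw1 : w = 1
        · subst hw1
          rw [hT1, hτε1, one_smul, one_smul]
        · obtain ⟨j, hj⟩ := cs.exists_leftDescent_of_ne_one hw1
          set w' := cs.simple j * w with hw'
          have hww : cs.simple j * w' = w := by
            rw [hw', ← mul_assoc, cs.simple_mul_simple_self, one_mul]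
          have hdl := (cs.isLeftDescent_iff).mp hj
          rw [← hw'] at hdl
          have hlen : cs.length (cs.simple j * w') = cs.length (cs.simple j) + cs.length w' := by
            rw [hww, cs.length_simple]; omega
          have hlt : cs.length w' < n := by omega
          have hTw : (T w : H) = (T (cs.simple j) : H) * (T w' : H) := by
            rw [← hww, hT _ _ hlen, Units.val_mul]
          have hτw : (τε w : K) = (τε (cs.simple j) : K) * (τε w' : K) := by
            rw [← hww, hτε _ _ hlen, Units.val_mul]
          rw [hTw, hτw, mul_smul, ih _ hlt w' rfl, hscomm, hv j, smul_smul, mul_comm]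
    have hUv : U • v = ((((τε wJ)⁻¹ : Kˣ) : K) * ∑ w : W, ((τε w : K)) ^ 2) • v := by
      rw [hU, mul_smul, hS]
      have : (∑ w : W, algebraMap K H ((τε w : K)) * (T w : H)) • v
          = (∑ w : W, ((τε w : K)) ^ 2) • v := by
        rw [Finset.sum_smul, Finset.sum_smul]
        apply Finset.sum_congr rfl
        intro w _
        rw [mul_smul, IsScalarTower.algebraMap_smul, key (cs.length w) w rfl, smul_smul, sq]
      rw [this, IsScalarTower.algebraMap_smul, smul_smul]
    set c : K := (((τε wJ)⁻¹ : Kˣ) : K) * ∑ w : W, ((τε w : K)) ^ 2 with hc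
    have hc0 : c ≠ 0 := mul_ne_zero (Units.ne_zero _) hne
    refine ⟨c⁻¹ • v, ?_⟩
    rw [hscomm, hUv, smul_smul, inv_mul_cancel₀ hc0, one_smul]
  · rintro ⟨u, rfl⟩
    intro j
    rw [← mul_smul, hTU j, mul_smul, IsScalarTower.algebraMap_smul]
end

section
/- One has m̃_{1,1} = m̃_{s₁,s₁} = (1 − ab)/2, m̃_{1,s₁} = (x + x^{-1} − a − b)/2, and m̃_{s₁,1} = (−ab(x + x^{-1}) + a + b)/2. Moreover, with U := [[−a, 1], [−b, 1]] and U^{*T} := [[−a^{-1}, −b^{-1}], [1, 1]] (the transpose of the entrywise image of U under *), one has U M̃ U^{*T} = ((a − b)/2) · diag(−(x + x^{-1}) + a + a^{-1}, x + x^{-1} − b − b^{-1}). -/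
open Matrix

noncomputable section

/-- The field `ℚ(a, b, x)` of rational functions in three variables over `ℚ`. -/
abbrev RatFuncField : Type := FractionRing (MvPolynomial (Fin 3) ℚ)

/-- The variable `a`. -/
def va : RatFuncField := algebraMap (MvPolynomial (Fin 3) ℚ) RatFuncField (MvPolynomial.X 0)

/-- The variable `b`. -/
def vb : RatFuncField := algebraMap (MvPolynomial (Fin 3) ℚ) RatFuncField (MvPolynomial.X 1)

/-- The variable `x`. -/
def vx : RatFuncField := algebraMap (MvPolynomial (Fin 3) ℚ) RatFuncField (MvPolynomial.X 2)

lemma RFF_inj : Function.Injective (algebraMap (MvPolynomial (Fin 3) ℚ) RatFuncField) :=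
  IsFractionRing.injective _ _

lemma hva0 : va ≠ 0 := by
  simp only [va, ne_eq, map_eq_zero_iff _ RFF_inj]; exact MvPolynomial.X_ne_zero _
lemma hvb0 : vb ≠ 0 := by
  simp only [vb, ne_eq, map_eq_zero_iff _ RFF_inj]; exact MvPolynomial.X_ne_zero _
lemma hvx0 : vx ≠ 0 := by
  simp only [vx, ne_eq, map_eq_zero_iff _ RFF_inj]; exact MvPolynomial.X_ne_zero _

lemma hvx2 : vx * vx ≠ 1 := by
  intro h
  have h2 : (algebraMap (MvPolynomial (Fin 3) ℚ) RatFuncField) (MvPolynomial.X 2 * MvPolynomial.X 2) =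
      algebraMap (MvPolynomial (Fin 3) ℚ) RatFuncField 1 := by
    simpa [_root_.map_mul, vx] using h
  have := congrArg (MvPolynomial.eval (fun _ => (0:ℚ))) (RFF_inj h2)
  simp at this

lemma hδ0 : vx - vx⁻¹ ≠ 0 := by
  intro h
  have h1 : vx = vx⁻¹ := sub_eq_zero.mp h
  have : vx * vx = 1 := by nth_rewrite 2 [h1]; exact mul_inv_cancel₀ hvx0
  exact hvx2 this


set_option maxHeartbeats 1000000 in
/-- In `F = ℚ(a,b,x)` with `s₁` the `ℚ(a,b)`-automorphism sending
`x ↦ x⁻¹` and `*` the `ℚ`-automorphism sending `a ↦ a⁻¹`, `b ↦ b⁻¹`, `x ↦ x⁻¹`, the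
entries of the matrix `M̃ = (m̃_{v,v'})` built from `δ = x − x⁻¹`,
`F₀ = x(1−ax⁻¹)(1−bx⁻¹)`, `ẽ_1 = 1`, `ẽ_{s₁} = x⁻¹` are as given, and with
`U = [[−a,1],[−b,1]]` one has
`U M̃ U^{*T} = ((a−b)/2)·diag(−(x+x⁻¹)+a+a⁻¹, x+x⁻¹−b−b⁻¹)`. -/
theorem weight_matrix_steinberg_basis
    (s₁ star' : RatFuncField ≃+* RatFuncField)
    (hs₁a : s₁ va = va) (hs₁b : s₁ vb = vb) (hs₁x : s₁ vx = vx⁻¹)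
    (hsta : star' va = va⁻¹) (hstb : star' vb = vb⁻¹) (hstx : star' vx = vx⁻¹)
    (δ F₀ : RatFuncField) (hδ : δ = vx - vx⁻¹)
    (hF₀ : F₀ = vx * (1 - va * vx⁻¹) * (1 - vb * vx⁻¹))
    (mt : RatFuncField → RatFuncField → RatFuncField)
    (hmt : ∀ e e' : RatFuncField,
      mt e e' = (2 * δ)⁻¹ * (F₀ * e * star' e' - s₁ (F₀ * e * star' e')))
    (Mt : Matrix (Fin 2) (Fin 2) RatFuncField)
    (hMt : Mt = !![mt 1 1, mt 1 vx⁻¹; mt vx⁻¹ 1, mt vx⁻¹ vx⁻¹])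
    (U Ust : Matrix (Fin 2) (Fin 2) RatFuncField)
    (hU : U = !![-va, 1; -vb, 1]) (hUst : Ust = !![-va⁻¹, -vb⁻¹; 1, 1]) :
    mt 1 1 = (1 - va * vb) / 2 ∧
    mt vx⁻¹ vx⁻¹ = (1 - va * vb) / 2 ∧
    mt 1 vx⁻¹ = (vx + vx⁻¹ - va - vb) / 2 ∧
    mt vx⁻¹ 1 = (-(va * vb) * (vx + vx⁻¹) + va + vb) / 2 ∧
    U * Mt * Ust = ((va - vb) / 2) •
      !![-(vx + vx⁻¹) + va + va⁻¹, 0; 0, vx + vx⁻¹ - vb - vb⁻¹] := by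
  have hx := hvx0
  have ha := hva0
  have hb := hvb0
  have hd := hδ0
  have h2δ : (2 * δ) ≠ 0 := by
    rw [hδ]; exact mul_ne_zero two_ne_zero hd
  have hs₁inv : s₁ vx⁻¹ = vx := by rw [map_inv₀, hs₁x, inv_inv]
  have hstinv : star' vx⁻¹ = vx := by rw [map_inv₀, hstx, inv_inv]
  have hs₁F₀ : s₁ F₀ = vx⁻¹ * (1 - va * vx) * (1 - vb * vx) := by
    rw [hF₀]
    simp [_root_.map_mul, map_sub, hs₁a, hs₁b, hs₁x, hs₁inv]
  have key : ∀ A B : RatFuncField, A = (vx - vx⁻¹) * B → (2*(vx - vx⁻¹))⁻¹ * A = B / 2 := by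
    intro A B h
    rw [h, inv_mul_eq_div, div_eq_div_iff (mul_ne_zero two_ne_zero hd) two_ne_zero]
    ring
  have entry : ∀ e e' : RatFuncField, mt e e' = (2*δ)⁻¹ * (F₀ * e * star' e' - s₁ F₀ * s₁ e * s₁ (star' e')) := by
    intro e e'
    rw [hmt]; ring_nf; rw [_root_.map_mul, _root_.map_mul]; ring
  have m11 : mt 1 1 = (1 - va * vb) / 2 := by
    rw [entry]
    simp only [_root_.map_one, mul_one]
    rw [hs₁F₀, hF₀, hδ]
    apply key
    field_simp
    ring
  have m22 : mt vx⁻¹ vx⁻¹ = (1 - va * vb) / 2 := by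
    rw [entry, hstinv, hs₁inv, hs₁x, hs₁F₀, hF₀, hδ]
    apply key
    field_simp
    ring
  have m12 : mt 1 vx⁻¹ = (vx + vx⁻¹ - va - vb) / 2 := by
    rw [entry, hstinv, hs₁x, _root_.map_one, hs₁F₀, hF₀, hδ]
    simp only [mul_one, one_mul]
    apply key
    field_simp
    ring
  have m21 : mt vx⁻¹ 1 = (-(va * vb) * (vx + vx⁻¹) + va + vb) / 2 := by
    rw [entry, _root_.map_one, _root_.map_one, hs₁inv, hs₁F₀, hF₀, hδ]
    simp only [mul_one, one_mul]
    apply key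
    field_simp
    ring
  refine ⟨m11, m22, m12, m21, ?_⟩
  rw [hMt, hU, hUst, m11, m22, m12, m21]
  have ra : va * va⁻¹ = 1 := mul_inv_cancel₀ ha
  have rb : vb * vb⁻¹ = 1 := mul_inv_cancel₀ hb
  ext i j
  fin_cases i <;> fin_cases j <;>
    simp [Matrix.mul_apply, Fin.sum_univ_two, Matrix.smul_apply]
  · linear_combination ((-(va * vb) + vb * vx + vb * vx⁻¹ - 1) / 2) * ra
  · linear_combination (-(va ^ 2 - va * vx - va * vx⁻¹ + 1) / 2) * rb
  · linear_combination (-(vb ^ 2 - vb * vx - vb * vx⁻¹ + 1) / 2) * ra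
  · linear_combination ((-(va * vb) + va * vx + va * vx⁻¹ - 1) / 2) * rb


end
end

section
/- The pair e₁ := 1, e_{s₁} := x^{-1}(1 − ax)(1 − bx) is a basis of A as a module over A₀, and it diagonalises T₁: one has T₁(e₁) = τ₁ e₁ and T₁(e_{s₁}) = τ₁ (ab)^{-1} e_{s₁}. -/
/-!
Write `X = T 1`; then `y = X + X⁻¹` is `s₁`-invariant. The recursion
`X^(n+1) = y X^n - X^(n-1)` shows that `1, X` span `A` over `A₀`, and
`e_{s₁} = (y - (a + b)) + (ab - 1) X` with `ab - 1` a unit, so `1, e_{s₁}` span as well. They are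
independent because `e_{s₁} - s₁ e_{s₁} = (ab - 1)(X - X⁻¹) ≠ 0`.

With `τ₁τ̃₁ = a` and `τ₁τ̃₁⁻¹ = -b` one has `ab = -τ₁²` and
`τ₁ (1 - X²) - ((τ₁ - τ₁⁻¹) + (τ̃₁ - τ̃₁⁻¹) X) = τ₁⁻¹ (1 - aX)(1 - bX)`, so that
`(1 - X²) T₁ f = (1 - X²) τ₁ f - τ₁⁻¹ (1 - aX)(1 - bX)(f - s₁ f)`. For `f = e_{s₁}` the last
product is `(1 - X²)(ab - 1) e_{s₁}` up to sign, whence the eigenvalue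
`τ₁ + τ₁⁻¹(ab - 1) = τ₁ (ab)⁻¹`.
-/

open LaurentPolynomial

theorem AlgHom.linearIndependent_one_of_apply_ne {R S : Type*} [CommRing R] [CommRing S]
    [NoZeroDivisors S] [Algebra R S] (σ : S →ₐ[R] S) {f : S} (hf : σ f ≠ f) :
    LinearIndependent (σ.equalizer (AlgHom.id R S)) ![1, f] := by
  rw [LinearIndependent.pair_iff]
  rintro ⟨p, hp⟩ ⟨q, hq⟩ hpq
  rw [AlgHom.mem_equalizer, AlgHom.id_apply] at hp hq
  replace hpq : p + q * f = 0 := by simpa [Subalgebra.smul_def] using hpq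
  have hσ : p + q * σ f = 0 := by simpa [hp, hq] using congrArg σ hpq
  have hq0 : q = 0 := by
    have : q * (f - σ f) = 0 := by linear_combination hpq - hσ
    exact (mul_eq_zero.mp this).resolve_right (sub_ne_zero.mpr hf.symm)
  subst hq0
  rw [zero_mul, add_zero] at hpq
  subst hpq
  exact ⟨rfl, rfl⟩

namespace LaurentPolynomial

section CommRing

variable {R : Type*} [CommRing R]

theorem T_one_mul_T_neg_one : (T 1 * T (-1) : R[T;T⁻¹]) = 1 := by
  rw [← T_add, add_neg_cancel, T_zero]

theorem T_one_add_T_neg_one_mul_T (n : ℤ) :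
    (T 1 + T (-1)) * T n = (T (n + 1) + T (n - 1) : R[T;T⁻¹]) := by
  rw [add_mul, ← T_add, ← T_add, add_comm 1 n, neg_add_eq_sub]

variable (σ : R[T;T⁻¹] →ₐ[R] R[T;T⁻¹])

theorem map_T_neg_one_of_map_T_one (hσ : σ (T 1) = T (-1)) : σ (T (-1)) = T 1 :=
  calc σ (T (-1)) = T 1 * (σ (T 1) * σ (T (-1))) := by
        rw [hσ, ← mul_assoc, T_one_mul_T_neg_one, one_mul]
    _ = T 1 := by rw [← map_mul, T_one_mul_T_neg_one, map_one, mul_one]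

theorem T_one_add_T_neg_one_mem_equalizer (hσ : σ (T 1) = T (-1)) :
    T 1 + T (-1) ∈ σ.equalizer (AlgHom.id R R[T;T⁻¹]) := by
  rw [AlgHom.mem_equalizer, map_add, hσ, map_T_neg_one_of_map_T_one σ hσ, AlgHom.id_apply,
    add_comm]

theorem span_one_T_one_eq_top (hσ : σ (T 1) = T (-1)) :
    Submodule.span (σ.equalizer (AlgHom.id R R[T;T⁻¹])) ({1, T 1} : Set R[T;T⁻¹]) = ⊤ := by
  set M := Submodule.span (σ.equalizer (AlgHom.id R R[T;T⁻¹])) ({1, T 1} : Set R[T;T⁻¹])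
  have hy {f : R[T;T⁻¹]} (hf : f ∈ M) : (T 1 + T (-1)) * f ∈ M :=
    M.smul_mem ⟨_, T_one_add_T_neg_one_mem_equalizer σ hσ⟩ hf
  have hT (n : ℤ) : T n ∈ M ∧ T (n + 1) ∈ M := by
    induction n using Int.induction_on with
    | zero => exact ⟨by rw [T_zero]; exact Submodule.subset_span (by simp),
        Submodule.subset_span (by simp)⟩
    | succ i ih =>
      refine ⟨ih.2, ?_⟩
      have := sub_mem (hy ih.2) ih.1
      rwa [T_one_add_T_neg_one_mul_T, add_sub_cancel_right, add_sub_cancel_right] at this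
    | pred i ih =>
      refine ⟨?_, by rw [sub_add_cancel]; exact ih.1⟩
      have := sub_mem (hy ih.1) ih.2
      rwa [T_one_add_T_neg_one_mul_T, add_sub_cancel_left] at this
  refine Submodule.eq_top_iff'.mpr fun f => ?_
  induction f using LaurentPolynomial.induction_on' with
  | add p q hp hq => exact add_mem hp hq
  | C_mul_T n r => exact smul_eq_C_mul r (T n) ▸ M.smul_of_tower_mem r (hT n).1

theorem T_injective [Nontrivial R] : Function.Injective (T : ℤ → R[T;T⁻¹]) := fun m n h => by
  simpa using congrArg degree h

theorem one_sub_T_two_ne_zero [Nontrivial R] : (1 - T 2 : R[T;T⁻¹]) ≠ 0 :=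
  sub_ne_zero.mpr (T_zero (R := R) ▸ T_injective.ne (by decide))

/-- The paper's `e_{s₁}`. -/
noncomputable def askeyWilsonE (a b : R) : R[T;T⁻¹] :=
  T (-1) * (1 - C a * T 1) * (1 - C b * T 1)

theorem askeyWilsonE_eq (a b : R) :
    askeyWilsonE a b = T 1 + T (-1) - C (a + b) + C (a * b - 1) * T 1 := by
  simp only [askeyWilsonE, map_add, map_sub, map_mul, map_one]
  linear_combination (C a * C b * T 1 - C a - C b) * T_one_mul_T_neg_one (R := R)

theorem askeyWilsonE_sub_map (hσ : σ (T 1) = T (-1)) (a b : R) :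
    askeyWilsonE a b - σ (askeyWilsonE a b) = C (a * b - 1) * (T 1 - T (-1)) := by
  rw [askeyWilsonE_eq]
  simp only [map_add, map_sub, map_mul, hσ, map_T_neg_one_of_map_T_one σ hσ,
    C_eq_algebraMap, σ.commutes]
  ring

theorem span_one_askeyWilsonE_eq_top (hσ : σ (T 1) = T (-1)) {a b : R}
    (hab : IsUnit (a * b - 1)) :
    Submodule.span (σ.equalizer (AlgHom.id R R[T;T⁻¹])) ({1, askeyWilsonE a b} : Set R[T;T⁻¹])
      = ⊤ := by
  set M := Submodule.span (σ.equalizer (AlgHom.id R R[T;T⁻¹]))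
    ({1, askeyWilsonE a b} : Set R[T;T⁻¹])
  obtain ⟨c, hc⟩ := hab
  have h1 : (1 : R[T;T⁻¹]) ∈ M := Submodule.subset_span (by simp)
  have he : askeyWilsonE a b ∈ M := Submodule.subset_span (by simp)
  have hcc : C ((c⁻¹ : Rˣ) : R) * C (c : R) = 1 := by rw [← map_mul, Units.inv_mul, map_one]
  have hT : T 1 = (↑c⁻¹ : R) • (askeyWilsonE a b -
      (⟨_, T_one_add_T_neg_one_mem_equalizer σ hσ⟩ : σ.equalizer (AlgHom.id R R[T;T⁻¹])) • 1 +
      (a + b) • 1) := by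
    rw [Subalgebra.smul_def, smul_eq_mul, mul_one, smul_eq_C_mul, smul_eq_C_mul, mul_one,
      askeyWilsonE_eq, ← hc]
    linear_combination (-T 1) * hcc
  refine top_unique ((span_one_T_one_eq_top σ hσ).ge.trans (Submodule.span_le.mpr ?_))
  refine Set.insert_subset_iff.mpr ⟨h1, Set.singleton_subset_iff.mpr ?_⟩
  rw [hT]
  exact M.smul_of_tower_mem _ (add_mem (sub_mem he (M.smul_mem _ h1)) (M.smul_of_tower_mem _ h1))

theorem linearIndependent_one_askeyWilsonE [IsDomain R] (hσ : σ (T 1) = T (-1)) {a b : R}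
    (hab : a * b ≠ 1) :
    LinearIndependent (σ.equalizer (AlgHom.id R R[T;T⁻¹])) ![1, askeyWilsonE a b] := by
  refine σ.linearIndependent_one_of_apply_ne fun h => ?_
  have hC : (C (a * b - 1) : R[T;T⁻¹]) ≠ 0 := by
    rw [← single_eq_C]
    exact AddMonoidAlgebra.single_ne_zero.mpr (sub_ne_zero.mpr hab)
  have hT : (T 1 - T (-1) : R[T;T⁻¹]) ≠ 0 :=
    sub_ne_zero.mpr (T_injective.ne (by decide))
  have hsub := askeyWilsonE_sub_map σ hσ a b
  rw [h, sub_self] at hsub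
  exact mul_ne_zero hC hT hsub.symm

end CommRing

section DemazureLusztig

variable {K : Type*} [Field K] (σ : K[T;T⁻¹] →ₐ[K] K[T;T⁻¹])

/-- The defining formula of `T₁` (with `u = τ₁`, `v = τ̃₁`), multiplied through by `1 - x²`. -/
def IsDemazureLusztig (u v : Kˣ) (L : K[T;T⁻¹] →ₗ[K] K[T;T⁻¹]) : Prop :=
  ∀ f : K[T;T⁻¹], (1 - T 2) * L f = (1 - T 2) * ((u : K) • σ f) +
    (C ((u : K) - ((u⁻¹ : Kˣ) : K)) + C ((v : K) - ((v⁻¹ : Kˣ) : K)) * T 1) * (f - σ f)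

theorem noumi_factorization {u v a b : Kˣ} (ha : u * v = a) (hb : u * v⁻¹ = -b) :
    C (u : K) * (1 - T 2) - (C ((u : K) - ((u⁻¹ : Kˣ) : K)) + C ((v : K) - ((v⁻¹ : Kˣ) : K)) * T 1)
      = C ((u : K)⁻¹) * (1 - C (a : K) * T 1) * (1 - C (b : K) * T 1) := by
  have ha' : (a : K) = u * v := by rw [← ha, Units.val_mul]
  have hb' : (b : K) = -(u * (v : K)⁻¹) := by
    rw [← neg_neg b, ← hb, Units.val_neg, Units.val_mul, Units.val_inv_eq_inv_val]
  have hsum : (u : K)⁻¹ * (a + b) = v - (v : K)⁻¹ := by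
    rw [ha', hb']
    field_simp
    ring
  have hprod : (u : K)⁻¹ * (a * b) = -u := by rw [ha', hb']; field_simp
  calc _ = C ((u : K)⁻¹) - C ((u : K)⁻¹ * (a + b)) * T 1 +
        C ((u : K)⁻¹ * (a * b)) * (T 1 * T 1) := by
          rw [hsum, hprod, ← T_add, one_add_one_eq_two]
          simp only [map_sub, map_neg, Units.val_inv_eq_inv_val]
          ring
    _ = _ := by
          simp only [map_mul, map_add]
          ring

variable {σ}

theorem IsDemazureLusztig.one_sub_T_two_mul_apply {u v a b : Kˣ} {L : K[T;T⁻¹] →ₗ[K] K[T;T⁻¹]}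
    (hL : IsDemazureLusztig σ u v L) (ha : u * v = a) (hb : u * v⁻¹ = -b) (f : K[T;T⁻¹]) :
    (1 - T 2) * L f = (1 - T 2) * (C (u : K) * f) -
      C ((u : K)⁻¹) * (1 - C (a : K) * T 1) * (1 - C (b : K) * T 1) * (f - σ f) := by
  rw [hL f, smul_eq_C_mul]
  linear_combination (σ f - f) * noumi_factorization ha hb

theorem IsDemazureLusztig.apply_one {u v : Kˣ} {L : K[T;T⁻¹] →ₗ[K] K[T;T⁻¹]}
    (hL : IsDemazureLusztig σ u v L) : L 1 = (u : K) • 1 := by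
  refine mul_left_cancel₀ one_sub_T_two_ne_zero ?_
  rw [hL 1, map_one, sub_self, mul_zero, add_zero]

theorem IsDemazureLusztig.apply_askeyWilsonE {u v a b : Kˣ} {L : K[T;T⁻¹] →ₗ[K] K[T;T⁻¹]}
    (hL : IsDemazureLusztig σ u v L) (hσ : σ (T 1) = T (-1)) (ha : u * v = a)
    (hb : u * v⁻¹ = -b) :
    L (askeyWilsonE (a : K) b) = ((u : K) * ((a : K) * b)⁻¹) • askeyWilsonE (a : K) b := by
  have hab : (a : K) * b = -(u : K) ^ 2 := by
    rw [← neg_neg b, ← ha, ← hb]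
    push_cast
    field_simp
  have heigen : (u : K) * ((a : K) * b)⁻¹ = u + (u : K)⁻¹ * (a * b - 1) := by
    rw [hab]
    field_simp
    ring
  have hP : (1 - T 2) * askeyWilsonE (a : K) b =
      (1 - C (a : K) * T 1) * (1 - C (b : K) * T 1) * (T (-1) - T 1) := by
    rw [askeyWilsonE, ← one_add_one_eq_two, T_add]
    linear_combination
      -(1 - C (a : K) * T 1) * (1 - C (b : K) * T 1) * T 1 * T_one_mul_T_neg_one (R := K)
  refine mul_left_cancel₀ one_sub_T_two_ne_zero ?_
  rw [hL.one_sub_T_two_mul_apply ha hb, askeyWilsonE_sub_map σ hσ, smul_eq_C_mul, heigen]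
  simp only [map_add, map_mul]
  linear_combination -C ((u : K)⁻¹) * C ((a : K) * b - 1) * hP

end DemazureLusztig

end LaurentPolynomial

/-- For the Demazure–Lusztig operator `T₁` of type `(C₁^∨, C₁)` with
Askey–Wilson parameters `a, b` on the Laurent polynomial ring `A = K[x, x⁻¹]`, the pair
`e₁ = 1`, `e_{s₁} = x⁻¹(1−ax)(1−bx)` is a basis of `A` over the invariant subring
`A₀ = A^{s₁}`, and it diagonalises `T₁`: `T₁ e₁ = τ₁ e₁` and
`T₁ e_{s₁} = τ₁ (ab)⁻¹ e_{s₁}`. -/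
theorem askey_wilson_basis_diagonalises_T1
    {K : Type*} [Field K] (a b τ₁ τt₁ : Kˣ)
    (hprod : τ₁ * τt₁ = a) (hquot : τ₁ * τt₁⁻¹ = -b) (hab : (a : K) * (b : K) ≠ 1)
    (s₁ : LaurentPolynomial K ≃ₐ[K] LaurentPolynomial K)
    (hs₁ : s₁ (LaurentPolynomial.T 1) = LaurentPolynomial.T (-1))
    (A₀ : Subalgebra K (LaurentPolynomial K))
    (hA₀ : A₀ = AlgHom.equalizer (s₁ : LaurentPolynomial K →ₐ[K] LaurentPolynomial K)
      (AlgHom.id K (LaurentPolynomial K)))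
    (T₁ : LaurentPolynomial K →ₗ[K] LaurentPolynomial K)
    (hT₁ : ∀ f : LaurentPolynomial K,
      (1 - LaurentPolynomial.T 2) * T₁ f =
        (1 - LaurentPolynomial.T 2) * ((τ₁ : K) • s₁ f) +
          (LaurentPolynomial.C ((τ₁ : K) - ((τ₁⁻¹ : Kˣ) : K)) +
            LaurentPolynomial.C ((τt₁ : K) - ((τt₁⁻¹ : Kˣ) : K)) * LaurentPolynomial.T 1) *
            (f - s₁ f))
    (e : LaurentPolynomial K)
    (he : e = LaurentPolynomial.T (-1) *
      (1 - LaurentPolynomial.C (a : K) * LaurentPolynomial.T 1) *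
      (1 - LaurentPolynomial.C (b : K) * LaurentPolynomial.T 1)) :
    LinearIndependent A₀ ![(1 : LaurentPolynomial K), e] ∧
    Submodule.span A₀ ({(1 : LaurentPolynomial K), e} : Set (LaurentPolynomial K)) = ⊤ ∧
    T₁ 1 = (τ₁ : K) • (1 : LaurentPolynomial K) ∧
    T₁ e = ((τ₁ : K) * ((a : K) * (b : K))⁻¹) • e := by
  subst hA₀ he
  have hT₁' : IsDemazureLusztig (s₁ : LaurentPolynomial K →ₐ[K] LaurentPolynomial K) τ₁ τt₁ T₁ :=
    hT₁
  exact ⟨linearIndependent_one_askeyWilsonE _ hs₁ hab,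
    span_one_askeyWilsonE_eq_top _ hs₁ (sub_ne_zero.mpr hab).isUnit,
    hT₁'.apply_one, hT₁'.apply_askeyWilsonE hs₁ hprod hquot⟩
end

section
/- Set x := T₁T₂ + T₂T₁ − (τ − τ^{-1})(T₁ + T₂) ∈ H. Then x commutes with T₂ (and hence with the subalgebra generated by T₂). Moreover, if * : H → H is an involutive ring anti-automorphism, semilinear over an involutive automorphism * of K with τ* = τ^{-1}, such that T_i* = T_i^{-1} for i = 1, 2, then x* = x. -/
/-- In a Hecke algebra of type `A₂`, the element
`x = T₁T₂ + T₂T₁ − (τ − τ⁻¹)(T₁ + T₂)` commutes with `T₂` (hence with the subalgebra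
generated by `T₂`), and is fixed by any involutive semilinear anti-automorphism `*`
with `τ* = τ⁻¹` and `T_i* = T_i⁻¹`. -/
theorem hecke_A2_centraliser_element
    {K : Type*} [Field K] (τ : Kˣ)
    {H : Type*} [Ring H] [Algebra K H] (T₁ T₂ : Hˣ)
    (hbraid : T₁ * T₂ * T₁ = T₂ * T₁ * T₂)
    (hquad₁ : ((T₁ : H) - algebraMap K H (τ : K)) * ((T₁ : H) + algebraMap K H ((τ⁻¹ : Kˣ) : K)) = 0)
    (hquad₂ : ((T₂ : H) - algebraMap K H (τ : K)) * ((T₂ : H) + algebraMap K H ((τ⁻¹ : Kˣ) : K)) = 0)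
    (x : H)
    (hx : x = (T₁ : H) * (T₂ : H) + (T₂ : H) * (T₁ : H) -
      algebraMap K H ((τ : K) - ((τ⁻¹ : Kˣ) : K)) * ((T₁ : H) + (T₂ : H))) :
    x * (T₂ : H) = (T₂ : H) * x ∧
    (∀ y ∈ Algebra.adjoin K ({(T₂ : H)} : Set H), x * y = y * x) ∧
    (∀ (σ : K →+* K) (st : H → H),
      Function.Involutive σ →
      (σ ((τ : K)) = ((τ⁻¹ : Kˣ) : K)) →
      (∀ u v : H, st (u + v) = st u + st v) →
      (∀ u v : H, st (u * v) = st v * st u) →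
      Function.Involutive st →
      (∀ (c : K) (u : H), st (algebraMap K H c * u) = algebraMap K H (σ c) * st u) →
      st (T₁ : H) = ((T₁⁻¹ : Hˣ) : H) →
      st (T₂ : H) = ((T₂⁻¹ : Hˣ) : H) →
      st x = x) := by
  set s : H := (T₁ : H) with hs
  set t : H := (T₂ : H) with ht
  set A : H := algebraMap K H ((τ : K) - ((τ⁻¹ : Kˣ) : K)) with hA
  -- A is central
  have hAc : ∀ y : H, y * A = A * y := fun y => (Algebra.commutes _ y).symm
  have hpull : ∀ y z : H, y * (A * z) = A * (y * z) := by
    intro y z; rw [← mul_assoc, hAc, mul_assoc]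
  -- quadratic relations rewritten
  have hinv : ∀ T : Hˣ,
      ((T : H) - algebraMap K H (τ : K)) * ((T : H) + algebraMap K H ((τ⁻¹ : Kˣ) : K)) = 0 →
      (T : H) * (T : H) = A * (T : H) + 1 := by
    intro T hq
    have h1 : algebraMap K H (τ : K) * algebraMap K H ((τ⁻¹ : Kˣ) : K) = 1 := by
      rw [← map_mul]
      norm_num
    have hA' : A = algebraMap K H (τ : K) - algebraMap K H ((τ⁻¹ : Kˣ) : K) := by
      rw [hA, map_sub]
    have hc : (T : H) * algebraMap K H ((τ⁻¹ : Kˣ) : K)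
        = algebraMap K H ((τ⁻¹ : Kˣ) : K) * (T : H) := (Algebra.commutes _ _).symm
    have := hq
    rw [sub_mul, mul_add, mul_add, hc, h1] at this
    rw [hA', sub_mul]
    linear_combination (norm := noncomm_ring) this
  have h1sq : s * s = A * s + 1 := hinv T₁ hquad₁
  have h2sq : t * t = A * t + 1 := hinv T₂ hquad₂
  -- part 1
  have hmain : x * t = t * x := by
    rw [hx]
    have e1 : (s * t + t * s - A * (s + t)) * t
        = s * (t * t) + t * (s * t) - A * (s * t) - A * (t * t) := by
      simp only [mul_add, add_mul, sub_mul, mul_sub, mul_assoc, hAc, hpull]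
      noncomm_ring
    have e2 : t * (s * t + t * s - A * (s + t))
        = t * (s * t) + (t * t) * s - A * (t * s) - A * (t * t) := by
      simp only [mul_add, add_mul, sub_mul, mul_sub, mul_assoc, hAc, hpull]
      noncomm_ring
    rw [e1, e2, h2sq]
    simp only [mul_add, add_mul, sub_mul, mul_sub, mul_assoc, hAc, hpull, mul_one, one_mul]
    noncomm_ring
  refine ⟨hmain, ?_, ?_⟩
  · intro y hy
    induction hy using Algebra.adjoin_induction with
    | mem z hz =>
      rcases hz with rfl
      exact hmain
    | algebraMap r => rw [← Algebra.commutes r x]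
    | add u v hu hv ihu ihv => rw [mul_add, add_mul, ihu, ihv]
    | mul u v hu hv ihu ihv => rw [← mul_assoc, ihu, mul_assoc, ihv, mul_assoc]
  · intro σ st hσinv hστ hadd hmul hstinv hsemi h1 h2
    -- inverses
    have hinv1 : ((T₁⁻¹ : Hˣ) : H) = s - A := by
      have hu : s * (s - A) = 1 := by
        rw [mul_sub, h1sq, ← hAc]; abel
      have h0 : ((T₁⁻¹ : Hˣ) : H) * s = 1 := by rw [hs]; exact Units.inv_mul _
      calc ((T₁⁻¹ : Hˣ) : H) = ((T₁⁻¹ : Hˣ) : H) * (s * (s - A)) := by rw [hu, mul_one]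
        _ = (((T₁⁻¹ : Hˣ) : H) * s) * (s - A) := by rw [mul_assoc]
        _ = s - A := by rw [h0, one_mul]
    have hinv2 : ((T₂⁻¹ : Hˣ) : H) = t - A := by
      have hu : t * (t - A) = 1 := by
        rw [mul_sub, h2sq, ← hAc]; abel
      have h0 : ((T₂⁻¹ : Hˣ) : H) * t = 1 := by rw [ht]; exact Units.inv_mul _
      calc ((T₂⁻¹ : Hˣ) : H) = ((T₂⁻¹ : Hˣ) : H) * (t * (t - A)) := by rw [hu, mul_one]
        _ = (((T₂⁻¹ : Hˣ) : H) * t) * (t - A) := by rw [mul_assoc]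
        _ = t - A := by rw [h0, one_mul]
    have hst0 : st 0 = 0 := by
      have := hadd 0 0
      simpa using this.symm
    have hstneg : ∀ u : H, st (-u) = - st u := by
      intro u
      have := hadd u (-u)
      rw [add_neg_cancel, hst0] at this
      exact eq_neg_of_add_eq_zero_right this.symm
    have hstsub : ∀ u v : H, st (u - v) = st u - st v := by
      intro u v
      rw [sub_eq_add_neg, hadd, hstneg, sub_eq_add_neg]
    have hσ : algebraMap K H (σ ((τ : K) - ((τ⁻¹ : Kˣ) : K))) = -A := by
      have hτinv : ((τ⁻¹ : Kˣ) : K) = ((τ : K))⁻¹ := by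
        simp
      have : σ ((τ : K) - ((τ⁻¹ : Kˣ) : K)) = -((τ : K) - ((τ⁻¹ : Kˣ) : K)) := by
        rw [map_sub, hστ, hτinv, map_inv₀, hστ, hτinv, inv_inv]
        ring
      rw [this, map_neg, ← hA]
    rw [hx, hstsub, hadd, hmul, hmul, h1, h2, hinv1, hinv2, hsemi, hσ, hadd, h1, h2,
      hinv1, hinv2]
    simp only [mul_add, add_mul, sub_mul, mul_sub, mul_assoc, hAc, hpull, neg_mul,
      mul_one, one_mul]
    noncomm_ring
end
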